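/- Fix q₀ > 0. Let q : ℝ×ℝ → ℂ be twice continuously differentiable and satisfy the transformed Gerdjikov–Ivanov equation i q_t + q_{xx} + 2 i q₀² q_x − i q² (q_x)* − q₀² q² q* + (1/2) q³ (q*)² + (1/2) q₀⁴ q = 0. Then for every k ∈ ℂ the zero-curvature equation ∂_t X − ∂_x T + X T − T X = 0 holds at every (x,t) ∈ ℝ², where X = −i k² σ₃ + (i/2)(|q|² − q₀²) σ₃ + k Q and T = −2 i k⁴ σ₃ + ( i k² |q|² − i q₀² |q|² + (i/4)|q|⁴ + (3/4) i q₀⁴ ) σ₃ + (1/2)(Q_x Q − Q Q_x) + 2 k³ Q − i k Q_x σ₃ − k q₀² Q. -/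

import Mathlib

open Matrix Complex ComplexConjugate

noncomputable section

abbrev M2 : Type := Matrix (Fin 2) (Fin 2) ℂ

/-- The Pauli matrix σ₃. -/
def sigma3 : M2 := !![1, 0; 0, -1]

/-- The potential matrix Q = [[0, q],[−q*, 0]]. -/
def Qm (a : ℂ) : M2 := !![0, a; -(conj a), 0]

/-- The x-derivative of q. -/
def qx (q : ℝ × ℝ → ℂ) (x t : ℝ) : ℂ := deriv (fun s => q (s, t)) x

/-- X = −i k² σ₃ + (i/2)(|q|² − q₀²) σ₃ + k Q. -/
def XmatNZ (q₀ : ℝ) (q : ℝ × ℝ → ℂ) (k : ℂ) (x t : ℝ) : M2 :=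
  (-Complex.I * k ^ 2) • sigma3
    + (Complex.I / 2 * (q (x, t) * conj (q (x, t)) - (q₀ : ℂ) ^ 2)) • sigma3
    + k • Qm (q (x, t))

/-- T = −2 i k⁴ σ₃ + ( i k² |q|² − i q₀² |q|² + (i/4)|q|⁴ + (3/4) i q₀⁴ ) σ₃
      + (1/2)(Q_x Q − Q Q_x) + 2 k³ Q − i k Q_x σ₃ − k q₀² Q. -/
def TmatNZ (q₀ : ℝ) (q : ℝ × ℝ → ℂ) (k : ℂ) (x t : ℝ) : M2 :=
  (-2 * Complex.I * k ^ 4) • sigma3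
    + (Complex.I * k ^ 2 * (q (x, t) * conj (q (x, t)))
        - Complex.I * (q₀ : ℂ) ^ 2 * (q (x, t) * conj (q (x, t)))
        + (Complex.I / 4) * (q (x, t) * conj (q (x, t))) ^ 2
        + (3 / 4) * Complex.I * (q₀ : ℂ) ^ 4) • sigma3
    + (1 / 2 : ℂ) • (Qm (qx q x t) * Qm (q (x, t)) - Qm (q (x, t)) * Qm (qx q x t))
    + (2 * k ^ 3) • Qm (q (x, t))
    - (Complex.I * k) • (Qm (qx q x t) * sigma3)
    - (k * (q₀ : ℂ) ^ 2) • Qm (q (x, t))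

set_option maxHeartbeats 1600000 in
/-- If q is a C² solution of the transformed Gerdjikov–Ivanov equation
i q_t + q_{xx} + 2 i q₀² q_x − i q² (q_x)* − q₀² q² q* + (1/2) q³ (q*)² + (1/2) q₀⁴ q = 0,
then for every k the zero-curvature equation ∂_t X − ∂_x T + X T − T X = 0 holds. -/
theorem zero_curvature_of_transformed_GI (q₀ : ℝ) (hq₀ : 0 < q₀) (q : ℝ × ℝ → ℂ)
    (hq : ContDiff ℝ 2 q)
    (hGI : ∀ x t : ℝ,
      Complex.I * deriv (fun s => q (x, s)) t
        + deriv (fun s => deriv (fun s' => q (s', t)) s) x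
        + 2 * Complex.I * (q₀ : ℂ) ^ 2 * deriv (fun s => q (s, t)) x
        - Complex.I * q (x, t) ^ 2 * conj (deriv (fun s => q (s, t)) x)
        - (q₀ : ℂ) ^ 2 * q (x, t) ^ 2 * conj (q (x, t))
        + (1 / 2) * q (x, t) ^ 3 * (conj (q (x, t))) ^ 2
        + (1 / 2) * (q₀ : ℂ) ^ 4 * q (x, t) = 0) :
    ∀ (k : ℂ) (x t : ℝ),
      (Matrix.of fun i j => deriv (fun s => XmatNZ q₀ q k x s i j) t)
        - (Matrix.of fun i j => deriv (fun s => TmatNZ q₀ q k s t i j) x)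
        + XmatNZ q₀ q k x t * TmatNZ q₀ q k x t
        - TmatNZ q₀ q k x t * XmatNZ q₀ q k x t = 0 := by
  intro k x t
  have hGIx := hGI x t
  -- shorthand for the four basic quantities
  have hq2x : ContDiff ℝ 2 (fun s : ℝ => q (s, t)) := hq.comp (contDiff_id.prodMk contDiff_const)
  have hq2t : ContDiff ℝ 2 (fun s : ℝ => q (x, s)) := hq.comp (contDiff_const.prodMk contDiff_id)
  have hC : HasDerivAt (fun s => q (x, s)) (deriv (fun s => q (x, s)) t) t :=
    ((hq2t.differentiable (by norm_num)) t).hasDerivAt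
  have hB : HasDerivAt (fun s => q (s, t)) (deriv (fun s => q (s, t)) x) x :=
    ((hq2x.differentiable (by norm_num)) x).hasDerivAt
  have hd1 : ContDiff ℝ 1 (deriv (fun s : ℝ => q (s, t))) := by
    have := (contDiff_succ_iff_deriv (n := 1)).mp (by exact_mod_cast hq2x)
    exact this.2.2
  have hD : HasDerivAt (fun s => deriv (fun s' => q (s', t)) s)
      (deriv (fun s => deriv (fun s' => q (s', t)) s) x) x :=
    ((hd1.differentiable (by norm_num)) x).hasDerivAt
  set A := q (x, t) with hAdef
  set B := deriv (fun s => q (s, t)) x with hBdef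
  set C := deriv (fun s => q (x, s)) t with hCdef
  set D := deriv (fun s => deriv (fun s' => q (s', t)) s) x with hDdef
  -- conjugated GI equation
  have hGIc : -Complex.I * conj C + conj D - 2 * Complex.I * (q₀ : ℂ) ^ 2 * conj B
      + Complex.I * (conj A) ^ 2 * B - (q₀ : ℂ) ^ 2 * (conj A) ^ 2 * A
      + (1 / 2) * (conj A) ^ 3 * A ^ 2 + (1 / 2) * (q₀ : ℂ) ^ 4 * conj A = 0 := by
    have h := congrArg (starRingEnd ℂ) hGIx
    simp only [_root_.map_add, map_sub, _root_.map_mul, map_pow, map_div₀, _root_.map_one,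
      map_ofNat, Complex.conj_I, conj_conj, Complex.conj_ofReal, map_zero] at h
    linear_combination h
  have hstar : ∀ {f : ℝ → ℂ} {f' : ℂ} {y : ℝ}, HasDerivAt f f' y →
      HasDerivAt (fun s => conj (f s)) (conj f') y := fun h => h.star
  -- derivatives of the entries of X in t
  have dX00 : deriv (fun s => XmatNZ q₀ q k x s 0 0) t
      = Complex.I / 2 * (C * conj A + A * conj C) := by
    have h1 : (fun s => XmatNZ q₀ q k x s 0 0)
        = fun s => -Complex.I * k ^ 2
          + Complex.I / 2 * (q (x, s) * conj (q (x, s)) - (q₀ : ℂ) ^ 2) := by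
      funext s; simp [XmatNZ, sigma3, Qm]
    rw [h1]; exact ((((hC.mul (hstar hC)).sub_const _).const_mul (Complex.I / 2)).const_add
      (-Complex.I * k ^ 2)).deriv
  have dX01 : deriv (fun s => XmatNZ q₀ q k x s 0 1) t = k * C := by
    have h1 : (fun s => XmatNZ q₀ q k x s 0 1) = fun s => k * q (x, s) := by
      funext s; simp [XmatNZ, sigma3, Qm]
    rw [h1, (hC.const_mul k).deriv]
  have dX10 : deriv (fun s => XmatNZ q₀ q k x s 1 0) t = -(k * conj C) := by
    have h1 : (fun s => XmatNZ q₀ q k x s 1 0) = fun s => -(k * conj (q (x, s))) := by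
      funext s; simp [XmatNZ, sigma3, Qm]
    rw [h1]; exact (((hstar hC).const_mul k).neg).deriv
  have dX11 : deriv (fun s => XmatNZ q₀ q k x s 1 1) t
      = -(Complex.I / 2 * (C * conj A + A * conj C)) := by
    have h1 : (fun s => XmatNZ q₀ q k x s 1 1)
        = fun s => -(-Complex.I * k ^ 2
          + Complex.I / 2 * (q (x, s) * conj (q (x, s)) - (q₀ : ℂ) ^ 2)) := by
      funext s; simp [XmatNZ, sigma3, Qm]; ring
    rw [h1]; exact (((((hC.mul (hstar hC)).sub_const _).const_mul (Complex.I / 2)).const_add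
      (-Complex.I * k ^ 2)).neg).deriv
  -- derivatives of the entries of T in x
  have dT00 : deriv (fun s => TmatNZ q₀ q k s t 0 0) x
      = Complex.I * k ^ 2 * (B * conj A + A * conj B)
        - Complex.I * (q₀ : ℂ) ^ 2 * (B * conj A + A * conj B)
        + Complex.I / 4 * (2 * (A * conj A) * (B * conj A + A * conj B))
        + 1 / 2 * ((B * conj B + A * conj D) - (D * conj A + B * conj B)) := by
    have h1 : (fun s => TmatNZ q₀ q k s t 0 0)
        = fun s => -2 * Complex.I * k ^ 4
          + (Complex.I * k ^ 2 * (q (s, t) * conj (q (s, t)))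
            - Complex.I * (q₀ : ℂ) ^ 2 * (q (s, t) * conj (q (s, t)))
            + Complex.I / 4 * ((q (s, t) * conj (q (s, t))) * (q (s, t) * conj (q (s, t))))
            + 3 / 4 * Complex.I * (q₀ : ℂ) ^ 4)
          + 1 / 2 * (q (s, t) * conj (deriv (fun s' => q (s', t)) s)
            - deriv (fun s' => q (s', t)) s * conj (q (s, t))) := by
      funext s; simp [TmatNZ, sigma3, Qm, Matrix.mul_apply, Fin.sum_univ_two, qx]; ring
    have hqq : HasDerivAt (fun s => q (s, t) * conj (q (s, t)))
        (B * conj A + A * conj B) x := hB.mul (hstar hB)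
    have hbig := (((((hqq.const_mul (Complex.I * k ^ 2)).sub
        (hqq.const_mul (Complex.I * (q₀ : ℂ) ^ 2))).add
        ((hqq.mul hqq).const_mul (Complex.I / 4))).add_const
        (3 / 4 * Complex.I * (q₀ : ℂ) ^ 4)).const_add (-2 * Complex.I * k ^ 4)).add
        (((hB.mul (hstar hD)).sub (hD.mul (hstar hB))).const_mul (1 / 2))
    rw [h1]; refine hbig.deriv.trans ?_; ring
  have dT01 : deriv (fun s => TmatNZ q₀ q k s t 0 1) x
      = 2 * k ^ 3 * B + Complex.I * k * D - k * (q₀ : ℂ) ^ 2 * B := by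
    have h1 : (fun s => TmatNZ q₀ q k s t 0 1)
        = fun s => 2 * k ^ 3 * q (s, t) + Complex.I * k * deriv (fun s' => q (s', t)) s
          - k * (q₀ : ℂ) ^ 2 * q (s, t) := by
      funext s; simp [TmatNZ, sigma3, Qm, Matrix.mul_apply, Fin.sum_univ_two, qx]
    rw [h1]; exact (((hB.const_mul (2 * k ^ 3)).add (hD.const_mul (Complex.I * k))).sub
      (hB.const_mul (k * (q₀ : ℂ) ^ 2))).deriv
  have dT10 : deriv (fun s => TmatNZ q₀ q k s t 1 0) x
      = -(2 * k ^ 3 * conj B) + Complex.I * k * conj D + k * (q₀ : ℂ) ^ 2 * conj B := by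
    have h1 : (fun s => TmatNZ q₀ q k s t 1 0)
        = fun s => -(2 * k ^ 3 * conj (q (s, t)))
          + Complex.I * k * conj (deriv (fun s' => q (s', t)) s)
          + k * (q₀ : ℂ) ^ 2 * conj (q (s, t)) := by
      funext s; simp [TmatNZ, sigma3, Qm, Matrix.mul_apply, Fin.sum_univ_two, qx]
    rw [h1]; exact (((((hstar hB).const_mul (2 * k ^ 3)).neg).add
      ((hstar hD).const_mul (Complex.I * k))).add
      ((hstar hB).const_mul (k * (q₀ : ℂ) ^ 2))).deriv
  have dT11 : deriv (fun s => TmatNZ q₀ q k s t 1 1) x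
      = -(Complex.I * k ^ 2 * (B * conj A + A * conj B)
        - Complex.I * (q₀ : ℂ) ^ 2 * (B * conj A + A * conj B)
        + Complex.I / 4 * (2 * (A * conj A) * (B * conj A + A * conj B))
        + 1 / 2 * ((B * conj B + A * conj D) - (D * conj A + B * conj B))) := by
    have h1 : (fun s => TmatNZ q₀ q k s t 1 1)
        = fun s => -(-2 * Complex.I * k ^ 4
          + (Complex.I * k ^ 2 * (q (s, t) * conj (q (s, t)))
            - Complex.I * (q₀ : ℂ) ^ 2 * (q (s, t) * conj (q (s, t)))
            + Complex.I / 4 * ((q (s, t) * conj (q (s, t))) * (q (s, t) * conj (q (s, t))))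
            + 3 / 4 * Complex.I * (q₀ : ℂ) ^ 4)
          + 1 / 2 * (q (s, t) * conj (deriv (fun s' => q (s', t)) s)
            - deriv (fun s' => q (s', t)) s * conj (q (s, t)))) := by
      funext s; simp [TmatNZ, sigma3, Qm, Matrix.mul_apply, Fin.sum_univ_two, qx]; ring
    have hqq : HasDerivAt (fun s => q (s, t) * conj (q (s, t)))
        (B * conj A + A * conj B) x := hB.mul (hstar hB)
    have hbig := ((((((hqq.const_mul (Complex.I * k ^ 2)).sub
        (hqq.const_mul (Complex.I * (q₀ : ℂ) ^ 2))).add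
        ((hqq.mul hqq).const_mul (Complex.I / 4))).add_const
        (3 / 4 * Complex.I * (q₀ : ℂ) ^ 4)).const_add (-2 * Complex.I * k ^ 4)).add
        (((hB.mul (hstar hD)).sub (hD.mul (hstar hB))).const_mul (1 / 2))).neg
    rw [h1]; refine hbig.deriv.trans ?_; ring
  -- entry values of X and T at (x,t)
  have hX00 : XmatNZ q₀ q k x t 0 0
      = -Complex.I * k ^ 2 + Complex.I / 2 * (A * conj A - (q₀ : ℂ) ^ 2) := by
    rw [hAdef]; simp [XmatNZ, sigma3, Qm]
  have hX01 : XmatNZ q₀ q k x t 0 1 = k * A := by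
    rw [hAdef]; simp [XmatNZ, sigma3, Qm]
  have hX10 : XmatNZ q₀ q k x t 1 0 = -(k * conj A) := by
    rw [hAdef]; simp [XmatNZ, sigma3, Qm]
  have hX11 : XmatNZ q₀ q k x t 1 1
      = -(-Complex.I * k ^ 2 + Complex.I / 2 * (A * conj A - (q₀ : ℂ) ^ 2)) := by
    rw [hAdef]; simp [XmatNZ, sigma3, Qm]; ring
  have hT00 : TmatNZ q₀ q k x t 0 0
      = -2 * Complex.I * k ^ 4 + (Complex.I * k ^ 2 * (A * conj A)
          - Complex.I * (q₀ : ℂ) ^ 2 * (A * conj A) + Complex.I / 4 * (A * conj A) ^ 2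
          + 3 / 4 * Complex.I * (q₀ : ℂ) ^ 4)
        + 1 / 2 * (A * conj B - B * conj A) := by
    rw [hAdef, hBdef]; simp [TmatNZ, sigma3, Qm, Matrix.mul_apply, Fin.sum_univ_two, qx]; ring
  have hT01 : TmatNZ q₀ q k x t 0 1
      = 2 * k ^ 3 * A + Complex.I * k * B - k * (q₀ : ℂ) ^ 2 * A := by
    rw [hAdef, hBdef]; simp [TmatNZ, sigma3, Qm, Matrix.mul_apply, Fin.sum_univ_two, qx]
  have hT10 : TmatNZ q₀ q k x t 1 0
      = -(2 * k ^ 3 * conj A) + Complex.I * k * conj B + k * (q₀ : ℂ) ^ 2 * conj A := by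
    rw [hAdef, hBdef]; simp [TmatNZ, sigma3, Qm, Matrix.mul_apply, Fin.sum_univ_two, qx]
  have hT11 : TmatNZ q₀ q k x t 1 1
      = -(-2 * Complex.I * k ^ 4 + (Complex.I * k ^ 2 * (A * conj A)
          - Complex.I * (q₀ : ℂ) ^ 2 * (A * conj A) + Complex.I / 4 * (A * conj A) ^ 2
          + 3 / 4 * Complex.I * (q₀ : ℂ) ^ 4)
        + 1 / 2 * (A * conj B - B * conj A)) := by
    rw [hAdef, hBdef]; simp [TmatNZ, sigma3, Qm, Matrix.mul_apply, Fin.sum_univ_two, qx]; ring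
  -- finish entrywise
  ext i j
  fin_cases i <;> fin_cases j <;>
    simp only [Matrix.sub_apply, Matrix.add_apply, Matrix.of_apply, Matrix.zero_apply,
      Matrix.mul_apply, Fin.sum_univ_two, Fin.isValue, Fin.zero_eta, Fin.mk_one] <;>
    simp only [dX00, dX01, dX10, dX11, dT00, dT01, dT10, dT11,
      hX00, hX01, hX10, hX11, hT00, hT01, hT10, hT11]
  · linear_combination (conj A / 2) * hGIx - (A / 2) * hGIc
  · linear_combination (-Complex.I * k) * hGIx
      + (k * C + k * (A * conj A) * B - k * A ^ 2 * conj B + k * (q₀ : ℂ) ^ 2 * B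
        - 2 * k ^ 3 * B) * Complex.I_sq
  · linear_combination (-Complex.I * k) * hGIc
      + (-(k * conj C) + k * (conj A) ^ 2 * B - k * (A * conj A) * conj B
        - k * (q₀ : ℂ) ^ 2 * conj B + 2 * k ^ 3 * conj B) * Complex.I_sq
  · linear_combination (-(conj A) / 2) * hGIx + (A / 2) * hGIc
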